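/- arXiv:1501.00120 — 4 statements merged into one kernel-verified Lean document; each statement's English description precedes it below -/
import Mathlib

section
/- Let A be a partial H-bimodule algebra satisfying the symmetry condition, and let φ:A→Hom_k(H,A) be defined by φ(a)(h)=h₁⇀a↼S(h₂). Then φ is an injective k-linear map that is multiplicative with respect to the convolution product: φ(ab)=φ(a)∗φ(b) for all a,b∈A. -/
open TensorProduct

noncomputable section

/-- A partial `H`-bimodule algebra over a Hopf algebra `H`: a unital algebra `A`
with a partial left action `⇀ : H ⊗ A → A` and a partial right action `↼ : A ⊗ H → A`
(encoded as curried `k`-bilinear maps), satisfying the partial (bi)module algebra axioms.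
Sweedler sums `Σ h₁ ⊗ h₂ = Δ(h)` are encoded by quantifying over arbitrary finite
representations of the comultiplication. -/
structure PartialBimoduleAlgebra (k H A : Type) [Field k] [Ring H] [HopfAlgebra k H]
    [Ring A] [Algebra k A] where
  /-- the partial left action `h ⇀ a` -/
  actL : H →ₗ[k] A →ₗ[k] A
  /-- the partial right action `a ↼ h` -/
  actR : A →ₗ[k] H →ₗ[k] A
  /-- `1_H ⇀ a = a` -/
  actL_one : ∀ a : A, actL 1 a = a
  /-- `h ⇀ (ab) = (h₁ ⇀ a)(h₂ ⇀ b)` -/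
  actL_mul : ∀ (h : H) (a b : A) (ι : Type) (s : Finset ι) (h₁ h₂ : ι → H),
    Coalgebra.comul (R := k) h = ∑ i ∈ s, h₁ i ⊗ₜ[k] h₂ i →
    actL h (a * b) = ∑ i ∈ s, actL (h₁ i) a * actL (h₂ i) b
  /-- `h ⇀ (g ⇀ a) = (h₁ ⇀ 1_A)((h₂ g) ⇀ a)` -/
  actL_actL : ∀ (h g : H) (a : A) (ι : Type) (s : Finset ι) (h₁ h₂ : ι → H),
    Coalgebra.comul (R := k) h = ∑ i ∈ s, h₁ i ⊗ₜ[k] h₂ i →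
    actL h (actL g a) = ∑ i ∈ s, actL (h₁ i) 1 * actL (h₂ i * g) a
  /-- `a ↼ 1_H = a` -/
  actR_one : ∀ a : A, actR a 1 = a
  /-- `(ab) ↼ h = (a ↼ h₁)(b ↼ h₂)` -/
  actR_mul : ∀ (h : H) (a b : A) (ι : Type) (s : Finset ι) (h₁ h₂ : ι → H),
    Coalgebra.comul (R := k) h = ∑ i ∈ s, h₁ i ⊗ₜ[k] h₂ i →
    actR (a * b) h = ∑ i ∈ s, actR a (h₁ i) * actR b (h₂ i)
  /-- `(a ↼ g) ↼ h = (1_A ↼ h₁)(a ↼ (g h₂))` -/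
  actR_actR : ∀ (g h : H) (a : A) (ι : Type) (s : Finset ι) (h₁ h₂ : ι → H),
    Coalgebra.comul (R := k) h = ∑ i ∈ s, h₁ i ⊗ₜ[k] h₂ i →
    actR (actR a g) h = ∑ i ∈ s, actR 1 (h₁ i) * actR a (g * h₂ i)
  /-- `(h ⇀ a) ↼ g = h ⇀ (a ↼ g)` -/
  compat : ∀ (h g : H) (a : A), actR (actL h a) g = actL h (actR a g)

/-- The two-fold iterated comultiplication `h ↦ h₁ ⊗ (h₂ ⊗ h₃)`. -/
def comul3 (k H : Type) [Field k] [Ring H] [HopfAlgebra k H] :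
    H →ₗ[k] H ⊗[k] (H ⊗[k] H) :=
  LinearMap.lTensor H (Coalgebra.comul (R := k)) ∘ₗ Coalgebra.comul (R := k)

/-- `μ` is the partial twisted smash product multiplication on `A ⊗ H`:
on pure tensors, `(a ⊗ h)(b ⊗ g) = a (h₁ ⇀ b ↼ S(h₃)) ⊗ h₂ g`. -/
def IsPartialSmashMul (k H A : Type) [Field k] [Ring H] [HopfAlgebra k H]
    [Ring A] [Algebra k A] (P : PartialBimoduleAlgebra k H A)
    (μ : A ⊗[k] H →ₗ[k] A ⊗[k] H →ₗ[k] A ⊗[k] H) : Prop :=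
  ∀ (a b : A) (h g : H) (ι : Type) (s : Finset ι) (h₁ h₂ h₃ : ι → H),
    comul3 k H h = ∑ i ∈ s, h₁ i ⊗ₜ[k] (h₂ i ⊗ₜ[k] h₃ i) →
    μ (a ⊗ₜ[k] h) (b ⊗ₜ[k] g)
      = ∑ i ∈ s,
          (a * P.actR (P.actL (h₁ i) b) (HopfAlgebra.antipode (R := k) (h₃ i)))
            ⊗ₜ[k] (h₂ i * g)

/-- The symmetry condition `(a ↼ S(h₁)) ⊗ h₂ = (a ↼ S(h₂)) ⊗ h₁` in `A ⊗ H`. -/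
def SymCond (k H A : Type) [Field k] [Ring H] [HopfAlgebra k H]
    [Ring A] [Algebra k A] (P : PartialBimoduleAlgebra k H A) : Prop :=
  ∀ (a : A) (h : H) (ι : Type) (s : Finset ι) (h₁ h₂ : ι → H),
    Coalgebra.comul (R := k) h = ∑ i ∈ s, h₁ i ⊗ₜ[k] h₂ i →
    ∑ i ∈ s, P.actR a (HopfAlgebra.antipode (R := k) (h₁ i)) ⊗ₜ[k] h₂ i
      = ∑ i ∈ s, P.actR a (HopfAlgebra.antipode (R := k) (h₂ i)) ⊗ₜ[k] h₁ i

/-- The convolution product on `Hom_k(H, A)`: `(f ∗ g)(h) = f(h₁) g(h₂)`. -/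
def conv (k H A : Type) [Field k] [Ring H] [HopfAlgebra k H]
    [Ring A] [Algebra k A] (f g : H →ₗ[k] A) : H →ₗ[k] A :=
  LinearMap.mul' k A ∘ₗ TensorProduct.map f g ∘ₗ Coalgebra.comul (R := k)

/-
Write `φ(a) = F_a ∘ Δ` with `F_a (x ⊗ y) = (x ⇀ a) ↼ S(y)`. Since `Δ 1 = 1 ⊗ 1`, `φ(a)(1) = a`, so
`φ` is injective. Multiplicativity of both partial actions together with
`Δ(S y) = S(y₂) ⊗ S(y₁)` gives `φ(ab)(h) = F_a(h₁ ⊗ h₄) F_b(h₂ ⊗ h₃)`, whereas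
`(φ(a) ∗ φ(b))(h) = F_a(h₁ ⊗ h₂) F_b(h₃ ⊗ h₄)`. By coassociativity these are the two sides of
`F_a(h₁ ⊗ h₃) φ(b)(h₂) = F_a(h₁ ⊗ h₂) φ(b)(h₃)`, which is the symmetry condition for the element
`h₁ ⇀ a`, composed with `φ(b)`.
-/

open Coalgebra HopfAlgebra LinearMap WithConv
open Algebra.TensorProduct (includeLeft includeRight)

section
variable {R H : Type*} [CommSemiring R] [Semiring H] [HopfAlgebra R H]

lemma toConv_comul_eq_includeLeft_mul_includeRight :
    toConv (comul : H →ₗ[R] H ⊗[R] H) =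
      toConv (includeLeft : H →ₐ[R] H ⊗[R] H).toLinearMap *
        toConv (includeRight : H →ₐ[R] H ⊗[R] H).toLinearMap := by
  ext h
  rw [(ℛ R h).convMul_apply]
  simp [← (ℛ R h).eq]

lemma toConv_map_antipode_antipode_comp_comm_comp_comul :
    toConv (map (antipode R) (antipode R) ∘ₗ (TensorProduct.comm R H H).toLinearMap ∘ₗ comul) =
      toConv ((includeRight : H →ₐ[R] H ⊗[R] H).toLinearMap ∘ₗ antipode R) *
        toConv ((includeLeft : H →ₐ[R] H ⊗[R] H).toLinearMap ∘ₗ antipode R) := by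
  ext h
  rw [(ℛ R h).convMul_apply]
  simp [← (ℛ R h).eq]

lemma toConv_algHom_comp_antipode_mul {B : Type*} [Semiring B] [Algebra R B] (f : H →ₐ[R] B) :
    toConv (f.toLinearMap ∘ₗ antipode R) * toConv f.toLinearMap = 1 := by
  have h := algHom_comp_convMul_distrib f (toConv (antipode R (A := H))) (toConv .id)
  rw [antipode_mul_id] at h
  ext x
  simpa using (LinearMap.congr_fun h x).symm

/-- Both sides are convolution inverses of `Δ = ι₁ ∗ ι₂` (`ι₁`, `ι₂` the two inclusions
`H → H ⊗ H`): the right side is `(ι₂ ∘ S) ∗ (ι₁ ∘ S)`, a left inverse, and `Δ ∘ S` is a right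
inverse. -/
lemma comul_comp_antipode :
    comul ∘ₗ antipode R =
      map (antipode R) (antipode R) ∘ₗ (TensorProduct.comm R H H).toLinearMap ∘ₗ
        comul (A := H) := by
  refine toConv_injective (left_inv_eq_right_inv (M := WithConv (H →ₗ[R] H ⊗[R] H))
    (a := toConv comul) ?_ comul_right_inv).symm
  rw [toConv_map_antipode_antipode_comp_comm_comp_comul,
    toConv_comul_eq_includeLeft_mul_includeRight, mul_assoc, ← mul_assoc (toConv (includeLeft.toLinearMap ∘ₗ antipode R)),
    toConv_algHom_comp_antipode_mul, one_mul, toConv_algHom_comp_antipode_mul]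

end

section
variable {R C : Type*} [CommSemiring R] [AddCommMonoid C] [Module R C]

def TensorProduct.swapInner : (C ⊗[R] C) ⊗[R] (C ⊗[R] C) →ₗ[R] (C ⊗[R] C) ⊗[R] (C ⊗[R] C) :=
  (tensorTensorTensorComm R C C C C).toLinearMap ∘ₗ lTensor _ (TensorProduct.comm R C C).toLinearMap

@[simp] lemma TensorProduct.swapInner_tmul (x y z w : C) :
    swapInner ((x ⊗ₜ[R] y) ⊗ₜ[R] (z ⊗ₜ[R] w)) = (x ⊗ₜ w) ⊗ₜ (y ⊗ₜ z) := rfl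

variable [Coalgebra R C]

lemma map_comul_comul_comp_comul :
    map comul comul ∘ₗ comul =
      lTensor (C ⊗[R] C) comul ∘ₗ (TensorProduct.assoc R C C C).symm.toLinearMap ∘ₗ
        lTensor C comul ∘ₗ (comul : C →ₗ[R] C ⊗[R] C) := by
  simp only [coassoc_simps]

lemma swapInner_comp_map_comul_comul_comp_comul :
    swapInner ∘ₗ map comul comul ∘ₗ comul =
      lTensor (C ⊗[R] C) comul ∘ₗ (TensorProduct.assoc R C C C).symm.toLinearMap ∘ₗ
        lTensor C ((TensorProduct.comm R C C).toLinearMap ∘ₗ comul) ∘ₗ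
          (comul : C →ₗ[R] C ⊗[R] C) := by
  have coassoc4 : (TensorProduct.assoc R C C (C ⊗[R] C)).toLinearMap ∘ₗ rTensor (C ⊗[R] C) comul ∘ₗ
        lTensor C comul ∘ₗ (comul : C →ₗ[R] C ⊗[R] C) =
      lTensor C ((TensorProduct.assoc R C C C).toLinearMap ∘ₗ rTensor C comul) ∘ₗ
        lTensor C comul ∘ₗ comul := by
    simp only [coassoc_simps]
  have natural : swapInner ∘ₗ (TensorProduct.assoc R C C (C ⊗[R] C)).symm.toLinearMap ∘ₗ
        lTensor C ((TensorProduct.assoc R C C C).toLinearMap ∘ₗ rTensor C comul) =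
      lTensor (C ⊗[R] C) comul ∘ₗ (TensorProduct.assoc R C C C).symm.toLinearMap ∘ₗ
        lTensor C (TensorProduct.comm R C C).toLinearMap := by
    ext x y z
    simp only [AlgebraTensorModule.curry_apply, curry_apply, coe_restrictScalars, coe_comp,
      Function.comp_apply, lTensor_tmul, rTensor_tmul, LinearEquiv.coe_coe, comm_tmul,
      assoc_symm_tmul]
    induction comul (R := R) y using TensorProduct.induction_on with
    | zero => simp
    | tmul u v => simp
    | add s t hs ht => simp [tmul_add, add_tmul, hs, ht]
  calc swapInner ∘ₗ map comul comul ∘ₗ comul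
      = swapInner ∘ₗ (TensorProduct.assoc R C C (C ⊗[R] C)).symm.toLinearMap ∘ₗ
          ((TensorProduct.assoc R C C (C ⊗[R] C)).toLinearMap ∘ₗ rTensor (C ⊗[R] C) comul ∘ₗ
            lTensor C comul ∘ₗ (comul : C →ₗ[R] C ⊗[R] C)) := by
        simp only [← comp_assoc, LinearEquiv.symm_comp, id_comp, rTensor_comp_lTensor]
    _ = _ := by
        rw [coassoc4]
        simpa only [comp_assoc, lTensor_comp] using
          congrArg (· ∘ₗ lTensor C comul ∘ₗ (comul : C →ₗ[R] C ⊗[R] C)) natural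
end

namespace PartialBimoduleAlgebra

variable {k H A : Type} [Field k] [Ring H] [HopfAlgebra k H] [Ring A] [Algebra k A]
  (P : PartialBimoduleAlgebra k H A)

def sandwich (a : A) : H ⊗[k] H →ₗ[k] A :=
  lift P.actR ∘ₗ map (P.actL.flip a) (antipode k)

@[simp] lemma sandwich_tmul (a : A) (x y : H) :
    P.sandwich a (x ⊗ₜ y) = P.actR (P.actL x a) (antipode k y) := rfl

lemma sandwich_one (a : A) : P.sandwich a 1 = a := by
  rw [Algebra.TensorProduct.one_def, sandwich_tmul, antipode_one, P.actL_one, P.actR_one]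

lemma sandwich_mul (a b : A) :
    P.sandwich (a * b) =
      mul' k A ∘ₗ map (P.sandwich a) (P.sandwich b) ∘ₗ swapInner ∘ₗ map comul comul := by
  ext x y
  have hSy : comul (antipode k y) = ∑ j ∈ (ℛ k y).index,
      antipode k ((ℛ k y).right j) ⊗ₜ[k] antipode k ((ℛ k y).left j) := by
    rw [← comp_apply (f := comul), comul_comp_antipode]
    simp [← (ℛ k y).eq]
  simp only [AlgebraTensorModule.curry_apply, curry_apply, coe_restrictScalars, coe_comp,
    Function.comp_apply, map_tmul, sandwich_tmul]
  rw [P.actL_mul x a b _ _ _ _ (ℛ k x).eq.symm, ← (ℛ k x).eq, ← (ℛ k y).eq]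
  simp only [map_sum, LinearMap.sum_apply, sum_tmul, tmul_sum]
  rw [Finset.sum_comm]
  refine Finset.sum_congr rfl fun i _ => ?_
  rw [P.actR_mul _ _ _ _ _ _ _ hSy]
  simp

end PartialBimoduleAlgebra

namespace SymCond

variable {k H A : Type} [Field k] [Ring H] [HopfAlgebra k H] [Ring A] [Algebra k A]
  {P : PartialBimoduleAlgebra k H A}

lemma map_actR_comp_antipode_comp_comul (hsym : SymCond k H A P) (c : A) :
    map (P.actR c ∘ₗ antipode k) id ∘ₗ comul =
      map (P.actR c ∘ₗ antipode k) id ∘ₗ (TensorProduct.comm k H H).toLinearMap ∘ₗ comul := by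
  ext h
  have := hsym c h _ (ℛ k h).index (ℛ k h).left (ℛ k h).right (ℛ k h).eq.symm
  simpa [← (ℛ k h).eq] using this

lemma map_sandwich_comp_assoc_symm_comp_lTensor_comul (hsym : SymCond k H A P) (a : A)
    (g : H →ₗ[k] A) :
    map (P.sandwich a) g ∘ₗ (TensorProduct.assoc k H H H).symm.toLinearMap ∘ₗ lTensor H comul =
      map (P.sandwich a) g ∘ₗ (TensorProduct.assoc k H H H).symm.toLinearMap ∘ₗ
        lTensor H ((TensorProduct.comm k H H).toLinearMap ∘ₗ comul) := by
  have hx (x : H) : map (P.sandwich a) g ∘ₗ (TensorProduct.assoc k H H H).symm.toLinearMap ∘ₗ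
      TensorProduct.mk k H (H ⊗[k] H) x =
        lTensor A g ∘ₗ map (P.actR (P.actL x a) ∘ₗ antipode k) id := by
    ext y z
    simp
  ext x y
  have e (t : H ⊗[k] H) := LinearMap.congr_fun (hx x) t
  simp only [coe_comp, Function.comp_apply, mk_apply] at e
  simp only [AlgebraTensorModule.curry_apply, curry_apply, coe_restrictScalars, coe_comp,
    Function.comp_apply, lTensor_tmul, e]
  rw [← comp_apply (f := map _ id), hsym.map_actR_comp_antipode_comp_comul]
  rfl

lemma sandwich_mul_comp_comul (hsym : SymCond k H A P) (a b : A) :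
    P.sandwich (a * b) ∘ₗ comul =
      mul' k A ∘ₗ map (P.sandwich a ∘ₗ comul) (P.sandwich b ∘ₗ comul) ∘ₗ comul := by
  calc P.sandwich (a * b) ∘ₗ comul
      = mul' k A ∘ₗ map (P.sandwich a) (P.sandwich b) ∘ₗ
          (swapInner ∘ₗ map comul comul ∘ₗ comul) := by
        rw [PartialBimoduleAlgebra.sandwich_mul]
        simp only [comp_assoc]
    _ = mul' k A ∘ₗ (map (P.sandwich a) (P.sandwich b ∘ₗ comul) ∘ₗ
          (TensorProduct.assoc k H H H).symm.toLinearMap ∘ₗ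
            lTensor H ((TensorProduct.comm k H H).toLinearMap ∘ₗ comul)) ∘ₗ comul := by
        rw [swapInner_comp_map_comul_comul_comp_comul, ← map_comp_lTensor]
        simp only [comp_assoc]
    _ = mul' k A ∘ₗ (map (P.sandwich a) (P.sandwich b ∘ₗ comul) ∘ₗ
          (TensorProduct.assoc k H H H).symm.toLinearMap ∘ₗ lTensor H comul) ∘ₗ comul := by
        rw [hsym.map_sandwich_comp_assoc_symm_comp_lTensor_comul]
    _ = mul' k A ∘ₗ map (P.sandwich a) (P.sandwich b) ∘ₗ (lTensor (H ⊗[k] H) comul ∘ₗ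
          (TensorProduct.assoc k H H H).symm.toLinearMap ∘ₗ lTensor H comul ∘ₗ comul) := by
        rw [← map_comp_lTensor]
        simp only [comp_assoc]
    _ = mul' k A ∘ₗ map (P.sandwich a ∘ₗ comul) (P.sandwich b ∘ₗ comul) ∘ₗ comul := by
        rw [← map_comul_comul_comp_comul, map_comp]
        simp only [comp_assoc]

end SymCond

/-- the map `φ : A → Hom_k(H, A)`, `φ(a)(h) = h₁ ⇀ a ↼ S(h₂)`, is an
injective `k`-linear map which is multiplicative for the convolution product:
`φ(ab) = φ(a) ∗ φ(b)`. -/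
theorem phi_injective_and_multiplicative
    (k H A : Type) [Field k] [Ring H] [HopfAlgebra k H] [Ring A] [Algebra k A]
    (P : PartialBimoduleAlgebra k H A) (hsym : SymCond k H A P)
    (φ : A →ₗ[k] (H →ₗ[k] A))
    (hφ : ∀ (a : A) (h : H) (ι : Type) (s : Finset ι) (h₁ h₂ : ι → H),
      Coalgebra.comul (R := k) h = ∑ i ∈ s, h₁ i ⊗ₜ[k] h₂ i →
      φ a h = ∑ i ∈ s, P.actR (P.actL (h₁ i) a) (HopfAlgebra.antipode (R := k) (h₂ i))) :
    Function.Injective φ ∧ ∀ a b : A, φ (a * b) = conv k H A (φ a) (φ b) := by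
  have hφ_sandwich (a : A) : φ a = P.sandwich a ∘ₗ comul := by
    ext h
    rw [hφ a h _ (ℛ k h).index (ℛ k h).left (ℛ k h).right (ℛ k h).eq.symm, comp_apply,
      ← (ℛ k h).eq, map_sum]
    rfl
  refine ⟨fun a b hab => ?_, fun a b => ?_⟩
  · simpa [hφ_sandwich, P.sandwich_one] using LinearMap.congr_fun hab 1
  · rw [hφ_sandwich, hφ_sandwich, hφ_sandwich, hsym.sandwich_mul_comp_comul]
    rfl
end
end

section
/- Let A be a partial H-bimodule algebra satisfying the symmetry condition, φ:A→Hom_k(H,A) the map φ(a)(h)=h₁⇀a↼S(h₂), and for h∈H, f∈Hom_k(H,A) define (h▷f)(k):=f(kh). Then for all a,b∈A and h∈H: φ(b)∗(h▷φ(a)) = φ(b(h₁⇀a↼S(h₂))); in particular φ(1_A)∗(h▷φ(a)) = φ(h₁⇀a↼S(h₂)). -/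
open TensorProduct

noncomputable section

/-!
Write `φ c = actLR c ∘ σ`, where `actLR c (u ⊗ z) = (u ⇀ c) ↼ z` lives on the coalgebra `H ⊗ H`
and `σ x = x₁ ⊗ S x₂`. The axioms say that `c ↦ (· ⇀ c)` and `c ↦ (c ↼ ·)` are multiplicative for
convolution and that `(· ⇀ (g ⇀ d)) = (· ⇀ 1) ∗ (· g ⇀ d)`, `((d ↼ g) ↼ ·) = (1 ↼ ·) ∗ (d ↼ g ·)`;
by associativity of convolution the factors `· ⇀ 1` and `1 ↼ ·` are absorbed by `b`, so
`actLR (b ((g ⇀ a) ↼ g')) = actLR b ∗ ((u ⊗ z) ↦ (u g ⇀ a) ↼ g' z)`.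
As `S` is an anti-coalgebra map, `Δ (σ x) = (x₁ ⊗ S x₃) ⊗ σ x₂`, whereas
`(σ ⊗ σ) (Δ x) = (x₁ ⊗ S x₂) ⊗ σ x₃`: exchanging `x₂` and `x₃` is exactly what the symmetry
condition allows, whence `(actLR b ∘ σ) ∗ (K ∘ σ) = (actLR b ∗ K) ∘ σ`. Finally
`σ (x h) = x₁ h₁ ⊗ S h₂ S x₂` puts `φ a (· h)` in the form `K ∘ σ`.
-/

open HopfAlgebra WithConv
open Coalgebra (comul counit)
open scoped Coalgebra

namespace Coalgebra

variable {k C M : Type*} [CommSemiring k] [AddCommMonoid C] [Module k C] [Coalgebra k C]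
  [AddCommMonoid M] [Module k M]

@[simp] lemma Repr.arbitrary_left (x : C) : (ℛ k x).left = Prod.fst := rfl

@[simp] lemma Repr.arbitrary_right (x : C) : (ℛ k x).right = Prod.snd := rfl

lemma comul_eq_sum_arbitrary (x : C) :
    comul (R := k) x = ∑ i ∈ (ℛ k x).index, i.1 ⊗ₜ[k] i.2 :=
  (ℛ k x).eq.symm

lemma sum_arbitrary_coassoc (Φ : (C ⊗[k] C) ⊗[k] C →ₗ[k] M) (x : C) :
    ∑ i ∈ (ℛ k x).index, ∑ j ∈ (ℛ k i.1).index, Φ ((j.1 ⊗ₜ j.2) ⊗ₜ i.2) =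
      ∑ i ∈ (ℛ k x).index, ∑ j ∈ (ℛ k i.2).index, Φ ((i.1 ⊗ₜ j.1) ⊗ₜ j.2) := by
  simpa [map_sum] using congr(Φ ((_root_.TensorProduct.assoc k C C C).symm
    $(sum_tmul_tmul_eq (ℛ k x) (fun i ↦ ℛ k i.1) (fun i ↦ ℛ k i.2))))

end Coalgebra

namespace HopfAlgebra

variable {k H : Type*} [CommSemiring k] [Semiring H] [HopfAlgebra k H]

lemma toConv_comul_mul_map_antipode_comm_comul :
    toConv (comul (R := k) (A := H)) * toConv (map (antipode k) (antipode k) ∘ₗ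
      (TensorProduct.comm k H H).toLinearMap ∘ₗ comul (R := k) (A := H)) = 1 := by
  have hS (y : H) : ∑ j ∈ (ℛ k y).index, j.1 * antipode k j.2 = algebraMap k H (counit y) :=
    sum_mul_antipode_eq_algebraMap_counit (ℛ k y)
  have hε (y : H) : ∑ j ∈ (ℛ k y).index, counit (R := k) j.1 • j.2 = y :=
    Coalgebra.sum_counit_smul (ℛ k y)
  ext x
  rw [(ℛ k x).convMul_apply, LinearMap.convOne_apply]
  simp only [Coalgebra.Repr.arbitrary_left, Coalgebra.Repr.arbitrary_right]
  calc ∑ p ∈ (ℛ k x).index, comul (R := k) p.1 *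
        (map (antipode k) (antipode k) ∘ₗ (TensorProduct.comm k H H).toLinearMap ∘ₗ comul) p.2
      = ∑ p ∈ (ℛ k x).index, ∑ i ∈ (ℛ k p.1).index,
          (LinearMap.mul' k (H ⊗[k] H) ∘ₗ map .id (map (antipode k) (antipode k) ∘ₗ
            (TensorProduct.comm k H H).toLinearMap ∘ₗ comul)) ((i.1 ⊗ₜ i.2) ⊗ₜ p.2) := by
        simp [Coalgebra.comul_eq_sum_arbitrary (k := k) _, Finset.sum_mul]
    _ = ∑ p ∈ (ℛ k x).index, ∑ i ∈ (ℛ k p.2).index, ∑ j ∈ (ℛ k i.2).index,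
          (p.1 * antipode k j.2) ⊗ₜ[k] (i.1 * antipode k j.1) := by
        rw [Coalgebra.sum_arbitrary_coassoc]
        simp [Coalgebra.comul_eq_sum_arbitrary (k := k) _, Finset.mul_sum]
    _ = ∑ p ∈ (ℛ k x).index, ∑ i ∈ (ℛ k p.2).index, ∑ j ∈ (ℛ k i.1).index,
          (p.1 * antipode k i.2) ⊗ₜ[k] (j.1 * antipode k j.2) := by
        refine Finset.sum_congr rfl fun p _ ↦ ?_
        exact (Coalgebra.sum_arbitrary_coassoc ((TensorProduct.comm k H H).toLinearMap ∘ₗ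
          map (LinearMap.mul' k H ∘ₗ (antipode k).lTensor H)
            (LinearMap.mulLeft k p.1 ∘ₗ antipode k)) p.2).symm
    _ = ∑ p ∈ (ℛ k x).index, (p.1 * antipode k p.2) ⊗ₜ[k] 1 := by
        refine Finset.sum_congr rfl fun p _ ↦ ?_
        simp_rw [← tmul_sum, hS, Algebra.algebraMap_eq_smul_one, tmul_smul, smul_tmul',
          ← sum_tmul, ← mul_smul_comm, ← map_smul, ← Finset.mul_sum, ← map_sum, hε]
    _ = algebraMap k (H ⊗[k] H) (counit x) := by
        rw [← TensorProduct.sum_tmul, hS, Algebra.TensorProduct.algebraMap_apply]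

lemma comul_comp_antipode :
    comul ∘ₗ antipode k = map (antipode k) (antipode k) ∘ₗ
      (TensorProduct.comm k H H).toLinearMap ∘ₗ comul (R := k) (A := H) := by
  have hinv_left : toConv (comul ∘ₗ antipode k) * toConv (comul (R := k) (A := H)) = 1 := by
    have h := LinearMap.algHom_comp_convMul_distrib (Bialgebra.comulAlgHom k H)
      (toConv (antipode k)) (toConv .id)
    rw [LinearMap.antipode_mul_id] at h
    ext x
    simpa using congr($h x).symm
  exact congr(ofConv $(left_inv_eq_right_inv hinv_left toConv_comul_mul_map_antipode_comm_comul))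

variable (k H) in
def lTensorAntipodeComul : H →ₗ[k] H ⊗[k] H := (antipode k).lTensor H ∘ₗ comul

lemma lTensorAntipodeComul_apply (x : H) :
    lTensorAntipodeComul k H x = ∑ i ∈ (ℛ k x).index, i.1 ⊗ₜ antipode k i.2 := by
  simp [lTensorAntipodeComul, Coalgebra.comul_eq_sum_arbitrary (k := k) x]

lemma comul_lTensorAntipodeComul (x : H) :
    comul (R := k) (lTensorAntipodeComul k H x) = ∑ i ∈ (ℛ k x).index, ∑ j ∈ (ℛ k i.2).index,
      (i.1 ⊗ₜ antipode k j.2) ⊗ₜ lTensorAntipodeComul k H j.1 := by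
  calc comul (R := k) (lTensorAntipodeComul k H x)
      = ∑ p ∈ (ℛ k x).index, ∑ i ∈ (ℛ k p.1).index,
          ((tensorTensorTensorComm k H H H H).toLinearMap ∘ₗ map .id (comul ∘ₗ antipode k))
            ((i.1 ⊗ₜ i.2) ⊗ₜ p.2) := by
        rw [lTensorAntipodeComul_apply, map_sum]
        refine Finset.sum_congr rfl fun p _ ↦ ?_
        rw [TensorProduct.comul_tmul, Coalgebra.comul_eq_sum_arbitrary (k := k) p.1]
        simp [sum_tmul, AlgebraTensorModule.tensorTensorTensorComm_eq]
    _ = ∑ p ∈ (ℛ k x).index, ∑ i ∈ (ℛ k p.2).index, ∑ j ∈ (ℛ k i.2).index,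
          (p.1 ⊗ₜ antipode k j.2) ⊗ₜ[k] (i.1 ⊗ₜ antipode k j.1) := by
        rw [Coalgebra.sum_arbitrary_coassoc, comul_comp_antipode]
        simp [Coalgebra.comul_eq_sum_arbitrary (k := k) _, tmul_sum]
    _ = _ := by
        refine Finset.sum_congr rfl fun p _ ↦ ?_
        have h := Coalgebra.sum_arbitrary_coassoc ((TensorProduct.comm k _ _).toLinearMap ∘ₗ
          map ((antipode k).lTensor H) (TensorProduct.mk k H H p.1 ∘ₗ antipode k)) p.2
        simp only [LinearMap.comp_apply, map_tmul, LinearMap.lTensor_tmul, mk_apply,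
          LinearEquiv.coe_coe, comm_tmul] at h
        simp [← h, lTensorAntipodeComul_apply, tmul_sum]

variable (k H) in
def mapMulRightMulLeft : H ⊗[k] H →ₗ[k] H ⊗[k] H →ₗ[k] H ⊗[k] H :=
  lift ((mapBilinear (RingHom.id k) H H H H).compl₁₂ (LinearMap.mul k H).flip (LinearMap.mul k H))

@[simp] lemma mapMulRightMulLeft_tmul_tmul (g g' u z : H) :
    mapMulRightMulLeft k H (g ⊗ₜ g') (u ⊗ₜ z) = (u * g) ⊗ₜ (g' * z) := rfl

lemma lTensorAntipodeComul_mul (y h : H) :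
    lTensorAntipodeComul k H (y * h) =
      mapMulRightMulLeft k H (lTensorAntipodeComul k H h) (lTensorAntipodeComul k H y) := by
  simp only [lTensorAntipodeComul, LinearMap.comp_apply, Bialgebra.comul_mul,
    Coalgebra.comul_eq_sum_arbitrary (k := k) y, Coalgebra.comul_eq_sum_arbitrary (k := k) h,
    Finset.sum_mul_sum, Algebra.TensorProduct.tmul_mul_tmul, map_sum, LinearMap.lTensor_tmul,
    LinearMap.sum_apply, mapMulRightMulLeft_tmul_tmul, antipode_mul_antidistrib]

end HopfAlgebra

namespace PartialBimoduleAlgebra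

variable {k H A : Type} [Field k] [Ring H] [HopfAlgebra k H] [Ring A] [Algebra k A]
  (P : PartialBimoduleAlgebra k H A)

lemma toConv_actL_flip_mul (b c : A) :
    toConv (P.actL.flip (b * c)) = toConv (P.actL.flip b) * toConv (P.actL.flip c) := by
  ext x
  rw [(ℛ k x).convMul_apply]
  exact P.actL_mul x b c _ _ _ _ (ℛ k x).eq.symm

lemma toConv_actL_flip_actL (g : H) (d : A) :
    toConv (P.actL.flip (P.actL g d)) =
      toConv (P.actL.flip 1) * toConv (P.actL.flip d ∘ₗ LinearMap.mulRight k g) := by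
  ext x
  rw [(ℛ k x).convMul_apply]
  exact P.actL_actL x g d _ _ _ _ (ℛ k x).eq.symm

lemma toConv_actL_flip_mul_actL (b : A) (g : H) (d : A) :
    toConv (P.actL.flip (b * P.actL g d)) =
      toConv (P.actL.flip b) * toConv (P.actL.flip d ∘ₗ LinearMap.mulRight k g) := by
  rw [toConv_actL_flip_mul, toConv_actL_flip_actL, ← mul_assoc, ← toConv_actL_flip_mul, mul_one]

lemma toConv_actR_mul (c d : A) :
    toConv (P.actR (c * d)) = toConv (P.actR c) * toConv (P.actR d) := by
  ext y
  rw [(ℛ k y).convMul_apply]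
  exact P.actR_mul y c d _ _ _ _ (ℛ k y).eq.symm

lemma toConv_actR_actR (c : A) (g : H) :
    toConv (P.actR (P.actR c g)) =
      toConv (P.actR 1) * toConv (P.actR c ∘ₗ LinearMap.mulLeft k g) := by
  ext y
  rw [(ℛ k y).convMul_apply]
  exact P.actR_actR g y c _ _ _ _ (ℛ k y).eq.symm

lemma toConv_actR_mul_actR (d c : A) (g : H) :
    toConv (P.actR (d * P.actR c g)) =
      toConv (P.actR d) * toConv (P.actR c ∘ₗ LinearMap.mulLeft k g) := by
  rw [toConv_actR_mul, toConv_actR_actR, ← mul_assoc, ← toConv_actR_mul, mul_one]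

def actLR (c : A) : H ⊗[k] H →ₗ[k] A := lift (P.actR ∘ₗ P.actL.flip c)

@[simp] lemma actLR_tmul (c : A) (u z : H) : P.actLR c (u ⊗ₜ z) = P.actR (P.actL u c) z := rfl

lemma toConv_actLR_mul_actLR (b a : A) (w : H ⊗[k] H) :
    toConv (P.actLR (b * P.actLR a w)) =
      toConv (P.actLR b) * toConv (P.actLR a ∘ₗ mapMulRightMulLeft k H w) := by
  induction w using TensorProduct.induction_on with
  | zero =>
    ext : 1
    refine TensorProduct.ext' fun u z ↦ ?_
    simp
  | add w w' hw hw' =>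
    have hadd : P.actLR (b * P.actLR a (w + w')) =
        P.actLR (b * P.actLR a w) + P.actLR (b * P.actLR a w') :=
      TensorProduct.ext' fun u z ↦ by simp [mul_add]
    rw [hadd, toConv_add, hw, hw', map_add, LinearMap.comp_add, toConv_add, mul_add]
  | tmul g g' =>
    ext : 1
    refine TensorProduct.ext' fun u z ↦ ?_
    rw [((ℛ k u).tmul (ℛ k z)).convMul_apply]
    simp only [Coalgebra.Repr.tmul_index, Coalgebra.Repr.tmul_left, Coalgebra.Repr.tmul_right,
      Finset.sum_product]
    have hL : P.actL u (b * P.actL g (P.actR a g')) =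
        ∑ i ∈ (ℛ k u).index, P.actL i.1 b * P.actR (P.actL (i.2 * g) a) g' := by
      have h := congr($(P.toConv_actL_flip_mul_actL b g (P.actR a g')) u)
      rw [(ℛ k u).convMul_apply] at h
      simpa [P.compat] using h
    have hR (i : H × H) : P.actR (P.actL i.1 b * P.actR (P.actL (i.2 * g) a) g') z =
        ∑ j ∈ (ℛ k z).index, P.actR (P.actL i.1 b) j.1 * P.actR (P.actL (i.2 * g) a) (g' * j.2) := by
      have h := congr($(P.toConv_actR_mul_actR (P.actL i.1 b) (P.actL (i.2 * g) a) g') z)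
      rw [(ℛ k z).convMul_apply] at h
      simpa using h
    rw [actLR_tmul, actLR_tmul, P.compat g g' a, hL]
    simp [hR]

lemma convMul_actLR_comp_lTensorAntipodeComul (hsym : SymCond k H A P) (b : A) (K : H ⊗[k] H →ₗ[k] A) :
    toConv (P.actLR b ∘ₗ lTensorAntipodeComul k H) * toConv (K ∘ₗ lTensorAntipodeComul k H) =
      toConv ((toConv (P.actLR b) * toConv K).ofConv ∘ₗ lTensorAntipodeComul k H) := by
  ext x
  rw [(ℛ k x).convMul_apply]
  symm
  calc ((toConv (P.actLR b) * toConv K).ofConv ∘ₗ lTensorAntipodeComul k H) x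
      = ∑ p ∈ (ℛ k x).index, ∑ q ∈ (ℛ k p.2).index,
          P.actR (P.actL p.1 b) (antipode k q.2) * K (lTensorAntipodeComul k H q.1) := by
        simp [comul_lTensorAntipodeComul, map_sum]
    _ = ∑ p ∈ (ℛ k x).index, ∑ q ∈ (ℛ k p.2).index,
          P.actR (P.actL p.1 b) (antipode k q.1) * K (lTensorAntipodeComul k H q.2) := by
        refine Finset.sum_congr rfl fun p _ ↦ ?_
        have h := congr(LinearMap.mul' k A (map .id (K ∘ₗ lTensorAntipodeComul k H)
          $(hsym (P.actL p.1 b) p.2 _ _ _ _ (ℛ k p.2).eq.symm)))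
        simpa [map_sum] using h.symm
    _ = ∑ p ∈ (ℛ k x).index, ∑ q ∈ (ℛ k p.1).index,
          P.actR (P.actL q.1 b) (antipode k q.2) * K (lTensorAntipodeComul k H p.2) :=
        (Coalgebra.sum_arbitrary_coassoc (LinearMap.mul' k A ∘ₗ
          map (P.actLR b ∘ₗ (antipode k).lTensor H) (K ∘ₗ lTensorAntipodeComul k H)) x).symm
    _ = _ := by simp [lTensorAntipodeComul_apply, Finset.sum_mul]

end PartialBimoduleAlgebra

/-- with `φ(a)(h) = h₁ ⇀ a ↼ S(h₂)` and `(h ▷ f)(x) = f(xh)`, one has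
`φ(b) ∗ (h ▷ φ(a)) = φ(b (h₁ ⇀ a ↼ S(h₂))) = φ(b · φ(a)(h))`; in particular,
`φ(1_A) ∗ (h ▷ φ(a)) = φ(h₁ ⇀ a ↼ S(h₂))`. -/
theorem phi_conv_translate
    (k H A : Type) [Field k] [Ring H] [HopfAlgebra k H] [Ring A] [Algebra k A]
    (P : PartialBimoduleAlgebra k H A) (hsym : SymCond k H A P)
    (φ : A →ₗ[k] (H →ₗ[k] A))
    (hφ : ∀ (a : A) (h : H) (ι : Type) (s : Finset ι) (h₁ h₂ : ι → H),
      Coalgebra.comul (R := k) h = ∑ i ∈ s, h₁ i ⊗ₜ[k] h₂ i →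
      φ a h = ∑ i ∈ s, P.actR (P.actL (h₁ i) a) (HopfAlgebra.antipode (R := k) (h₂ i))) :
    -- `φ(b) ∗ (h ▷ φ(a)) = φ(b (h₁ ⇀ a ↼ S(h₂)))`
    (∀ (a b : A) (h : H),
      conv k H A (φ b) (φ a ∘ₗ LinearMap.mulRight k h) = φ (b * φ a h)) ∧
    -- in particular `φ(1_A) ∗ (h ▷ φ(a)) = φ(h₁ ⇀ a ↼ S(h₂))`
    (∀ (a : A) (h : H),
      conv k H A (φ 1) (φ a ∘ₗ LinearMap.mulRight k h) = φ (φ a h)) := by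
  have hφ' (c : A) : φ c = P.actLR c ∘ₗ lTensorAntipodeComul k H := by
    ext x
    rw [hφ c x _ _ _ _ (ℛ k x).eq.symm]
    simp [lTensorAntipodeComul_apply]
  have hconv (a b : A) (h : H) :
      conv k H A (φ b) (φ a ∘ₗ LinearMap.mulRight k h) = φ (b * φ a h) := by
    have hM : φ a ∘ₗ LinearMap.mulRight k h =
        (P.actLR a ∘ₗ mapMulRightMulLeft k H (lTensorAntipodeComul k H h)) ∘ₗ
          lTensorAntipodeComul k H := by
      ext y
      simp [hφ', lTensorAntipodeComul_mul]
    calc conv k H A (φ b) (φ a ∘ₗ LinearMap.mulRight k h)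
        = (toConv (P.actLR b ∘ₗ lTensorAntipodeComul k H) *
            toConv ((P.actLR a ∘ₗ mapMulRightMulLeft k H (lTensorAntipodeComul k H h)) ∘ₗ
              lTensorAntipodeComul k H)).ofConv := by rw [hM, hφ' b]; rfl
      _ = φ (b * φ a h) := by
        rw [P.convMul_actLR_comp_lTensorAntipodeComul hsym, ← P.toConv_actLR_mul_actLR, hφ', hφ' a]
        rfl
  exact ⟨hconv, fun a h ↦ by simpa using hconv a 1 h⟩
end
end

section
/- Let A be a partial H-bimodule algebra, B an H-bimodule algebra, and θ:A→B an injective algebra morphism satisfying θ(a(h₁⇀b↼S(h₃)))⊗h₂ = θ(a)(h₁▷θ(b)◁S(h₃))⊗h₂ for all a,b∈A, h∈H (equivalence of the partial action on A with the induced partial action on θ(A)). Then the linear map Φ:A⊗H→B⊛H, a⊗h↦θ(a)⊗h, is injective and multiplicative, where A⊗H carries the partial twisted smash product (a⊗h)(b⊗g)=a(h₁⇀b↼S(h₃))⊗h₂g and B⊛H carries the twisted smash product (x⊗h)(y⊗g)=x(h₁▷y◁S(h₃))⊗h₂g. -/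
open TensorProduct

noncomputable section

/-- An `H`-bimodule algebra: a unital algebra `B` which is both a left and a right
`H`-module algebra, with commuting actions. Sweedler sums are encoded by quantifying
over finite representations of the comultiplication. -/
structure BimoduleAlgebra (k H B : Type) [Field k] [Ring H] [HopfAlgebra k H]
    [Ring B] [Algebra k B] where
  /-- the left action `h ▷ x` -/
  actL : H →ₗ[k] B →ₗ[k] B
  /-- the right action `x ◁ h` -/
  actR : B →ₗ[k] H →ₗ[k] B
  one_actL : ∀ x : B, actL 1 x = x
  mul_actL : ∀ (h g : H) (x : B), actL (h * g) x = actL h (actL g x)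
  /-- `h ▷ (xy) = (h₁ ▷ x)(h₂ ▷ y)` -/
  actL_mul : ∀ (h : H) (x y : B) (ι : Type) (s : Finset ι) (h₁ h₂ : ι → H),
    Coalgebra.comul (R := k) h = ∑ i ∈ s, h₁ i ⊗ₜ[k] h₂ i →
    actL h (x * y) = ∑ i ∈ s, actL (h₁ i) x * actL (h₂ i) y
  /-- `h ▷ 1 = ε(h) 1` -/
  actL_one : ∀ h : H, actL h 1 = Coalgebra.counit (R := k) h • (1 : B)
  one_actR : ∀ x : B, actR x 1 = x
  mul_actR : ∀ (h g : H) (x : B), actR x (g * h) = actR (actR x g) h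
  /-- `(xy) ◁ h = (x ◁ h₁)(y ◁ h₂)` -/
  actR_mul : ∀ (h : H) (x y : B) (ι : Type) (s : Finset ι) (h₁ h₂ : ι → H),
    Coalgebra.comul (R := k) h = ∑ i ∈ s, h₁ i ⊗ₜ[k] h₂ i →
    actR (x * y) h = ∑ i ∈ s, actR x (h₁ i) * actR y (h₂ i)
  /-- `1 ◁ h = ε(h) 1` -/
  actR_one : ∀ h : H, actR 1 h = Coalgebra.counit (R := k) h • (1 : B)
  /-- `(h ▷ x) ◁ g = h ▷ (x ◁ g)` -/
  compat : ∀ (h g : H) (x : B), actR (actL h x) g = actL h (actR x g)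

/-- `μ` is the twisted smash product multiplication on `B ⊗ H`:
on pure tensors, `(x ⊗ h)(y ⊗ g) = x (h₁ ▷ y ◁ S(h₃)) ⊗ h₂ g`. -/
def IsSmashMul (k H B : Type) [Field k] [Ring H] [HopfAlgebra k H]
    [Ring B] [Algebra k B] (Q : BimoduleAlgebra k H B)
    (μ : B ⊗[k] H →ₗ[k] B ⊗[k] H →ₗ[k] B ⊗[k] H) : Prop :=
  ∀ (x y : B) (h g : H) (ι : Type) (s : Finset ι) (h₁ h₂ h₃ : ι → H),
    comul3 k H h = ∑ i ∈ s, h₁ i ⊗ₜ[k] (h₂ i ⊗ₜ[k] h₃ i) →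
    μ (x ⊗ₜ[k] h) (y ⊗ₜ[k] g)
      = ∑ i ∈ s,
          (x * Q.actR (Q.actL (h₁ i) y) (HopfAlgebra.antipode (R := k) (h₃ i)))
            ⊗ₜ[k] (h₂ i * g)

private lemma sum_range_concat {M : Type} [AddCommMonoid M] (n m : ℕ) (f g : ℕ → M) :
    (∑ i ∈ Finset.range n, f i) + ∑ i ∈ Finset.range m, g i
      = ∑ i ∈ Finset.range (n + m), (if i < n then f i else g (i - n)) := by
  induction m with
  | zero => simp [Finset.sum_ite_of_true]
  | succ m ih =>
    rw [Finset.sum_range_succ, ← add_assoc, ih, ← Nat.add_assoc,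
      Finset.sum_range_succ]
    simp

private lemma rep_add {k M : Type} [Field k] [AddCommGroup M] [Module k M]
    {x y : M ⊗[k] (M ⊗[k] M)}
    (hx : ∃ (n : ℕ) (a b c : ℕ → M),
      x = ∑ i ∈ Finset.range n, a i ⊗ₜ[k] (b i ⊗ₜ[k] c i))
    (hy : ∃ (n : ℕ) (a b c : ℕ → M),
      y = ∑ i ∈ Finset.range n, a i ⊗ₜ[k] (b i ⊗ₜ[k] c i)) :
    ∃ (n : ℕ) (a b c : ℕ → M),
      x + y = ∑ i ∈ Finset.range n, a i ⊗ₜ[k] (b i ⊗ₜ[k] c i) := by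
  obtain ⟨n1, a1, b1, c1, h1⟩ := hx
  obtain ⟨n2, a2, b2, c2, h2⟩ := hy
  refine ⟨n1 + n2, fun i => if i < n1 then a1 i else a2 (i - n1),
    fun i => if i < n1 then b1 i else b2 (i - n1),
    fun i => if i < n1 then c1 i else c2 (i - n1), ?_⟩
  rw [h1, h2, sum_range_concat]
  refine Finset.sum_congr rfl fun i _ => ?_
  by_cases hi : i < n1 <;> simp [hi]

private lemma exists_triple_rep (k M : Type) [Field k] [AddCommGroup M] [Module k M]
    (x : M ⊗[k] (M ⊗[k] M)) :
    ∃ (n : ℕ) (a b c : ℕ → M),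
      x = ∑ i ∈ Finset.range n, a i ⊗ₜ[k] (b i ⊗ₜ[k] c i) := by
  induction x using TensorProduct.induction_on with
  | zero => exact ⟨0, 0, 0, 0, by simp⟩
  | tmul m y =>
    induction y using TensorProduct.induction_on with
    | zero => exact ⟨0, 0, 0, 0, by simp⟩
    | tmul b c => exact ⟨1, fun _ => m, fun _ => b, fun _ => c, by simp⟩
    | add y1 y2 ih1 ih2 =>
      rw [TensorProduct.tmul_add]
      exact rep_add ih1 ih2
  | add x1 x2 ih1 ih2 => exact rep_add ih1 ih2

/-- if `θ : A → B` is an injective algebra morphism intertwining the partial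
action on `A` with the partial action induced on `θ(A)` by the `H`-bimodule algebra
structure of `B`, then `Φ : A ⊗ H → B ⊛ H`, `a ⊗ h ↦ θ(a) ⊗ h`, is an injective
multiplicative map from the partial twisted smash product to the twisted smash product. -/
theorem envelope_monomorphism_of_smash_products
    (k H A B : Type) [Field k] [Ring H] [HopfAlgebra k H]
    [Ring A] [Algebra k A] [Ring B] [Algebra k B]
    (P : PartialBimoduleAlgebra k H A) (Q : BimoduleAlgebra k H B)
    (θ : A →ₐ[k] B) (hθ : Function.Injective θ)
    -- the partial action on `A` corresponds to the induced partial action on `θ(A)`: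
    -- `θ(a (h₁ ⇀ b ↼ S(h₃))) ⊗ h₂ = θ(a)(h₁ ▷ θ(b) ◁ S(h₃)) ⊗ h₂`
    (hequiv : ∀ (a b : A) (h : H) (ι : Type) (s : Finset ι) (h₁ h₂ h₃ : ι → H),
      comul3 k H h = ∑ i ∈ s, h₁ i ⊗ₜ[k] (h₂ i ⊗ₜ[k] h₃ i) →
      ∑ i ∈ s,
          θ (a * P.actR (P.actL (h₁ i) b) (HopfAlgebra.antipode (R := k) (h₃ i)))
            ⊗ₜ[k] h₂ i
        = ∑ i ∈ s,
            (θ a * Q.actR (Q.actL (h₁ i) (θ b)) (HopfAlgebra.antipode (R := k) (h₃ i)))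
              ⊗ₜ[k] h₂ i)
    (μA : A ⊗[k] H →ₗ[k] A ⊗[k] H →ₗ[k] A ⊗[k] H)
    (hμA : IsPartialSmashMul k H A P μA)
    (μB : B ⊗[k] H →ₗ[k] B ⊗[k] H →ₗ[k] B ⊗[k] H)
    (hμB : IsSmashMul k H B Q μB) :
    Function.Injective (TensorProduct.map θ.toLinearMap (LinearMap.id : H →ₗ[k] H)) ∧
    ∀ x y : A ⊗[k] H,
      TensorProduct.map θ.toLinearMap LinearMap.id (μA x y)
        = μB (TensorProduct.map θ.toLinearMap LinearMap.id x)
            (TensorProduct.map θ.toLinearMap LinearMap.id y) := by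
  constructor
  · exact Module.Flat.rTensor_preserves_injective_linearMap (M := H) θ.toLinearMap hθ
  · have key : ∀ (a b : A) (h g : H),
        TensorProduct.map θ.toLinearMap LinearMap.id (μA (a ⊗ₜ[k] h) (b ⊗ₜ[k] g))
          = μB (θ a ⊗ₜ[k] h) (θ b ⊗ₜ[k] g) := by
      intro a b h g
      obtain ⟨n, h₁, h₂, h₃, hrep⟩ := exists_triple_rep k H (comul3 k H h)
      rw [hμA a b h g ℕ (Finset.range n) h₁ h₂ h₃ hrep,
        hμB (θ a) (θ b) h g ℕ (Finset.range n) h₁ h₂ h₃ hrep]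
      have he := congrArg (LinearMap.lTensor B (LinearMap.mulRight k g))
        (hequiv a b h ℕ (Finset.range n) h₁ h₂ h₃ hrep)
      simpa [map_sum, TensorProduct.map_tmul, LinearMap.lTensor_tmul,
        LinearMap.mulRight_apply] using he
    intro x y
    induction x using TensorProduct.induction_on with
    | zero => simp
    | tmul a h =>
      induction y using TensorProduct.induction_on with
      | zero => simp
      | tmul b g => simpa using key a b h g
      | add y1 y2 hy1 hy2 => simp only [map_add, hy1, hy2]
    | add x1 x2 hx1 hx2 =>
      simp only [map_add, LinearMap.add_apply, hx1, hx2]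
end
end

section
/- Let H be a finite-dimensional Hopf algebra and A a partial H-bimodule algebra satisfying the symmetry condition, and let A⊛H=(A⊗H)(1_A⊗1_H) be the partial twisted smash product. For f∈H* and a typical element (a⊗h)(1_A⊗1_H)∈A⊛H define f·((a⊗h)(1_A⊗1_H)) := (a⊗(f⇀h))(1_A⊗1_H), where f⇀h=h₁f(h₂). Then this is a well-defined left action of the dual Hopf algebra H* making A⊛H a left H*-module algebra, i.e. f·(xy)=(f₁·x)(f₂·y) and ε_H(=1_{H*})·x=x for all x,y∈A⊛H, f∈H*, where Δ_{H*}(f)=f₁⊗f₂ is dual to the multiplication of H. -/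
open TensorProduct

noncomputable section

/-- The subspace `A ⊛ H := (A ⊗ H)(1_A ⊗ 1_H)` of `A ⊗ H`. -/
def unitalPart (k H A : Type) [Field k] [Ring H] [HopfAlgebra k H]
    [Ring A] [Algebra k A]
    (μ : A ⊗[k] H →ₗ[k] A ⊗[k] H →ₗ[k] A ⊗[k] H) : Submodule k (A ⊗[k] H) :=
  LinearMap.range (μ.flip ((1 : A) ⊗ₜ[k] (1 : H)))

/-- The left action of a functional `f ∈ H*` on `H`: `f ⇀ h = h₁ f(h₂)`. -/
def dualAct (k H : Type) [Field k] [Ring H] [HopfAlgebra k H]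
    (f : H →ₗ[k] k) : H →ₗ[k] H :=
  (TensorProduct.rid k H).toLinearMap ∘ₗ LinearMap.lTensor H f ∘ₗ Coalgebra.comul (R := k)

/-- The convolution product of two functionals on `H`: `(f ∗ g)(h) = f(h₁) g(h₂)`.
This is the multiplication of the dual Hopf algebra `H*`. -/
def convD (k H : Type) [Field k] [Ring H] [HopfAlgebra k H]
    (f g : H →ₗ[k] k) : H →ₗ[k] k :=
  LinearMap.mul' k k ∘ₗ TensorProduct.map f g ∘ₗ Coalgebra.comul (R := k)


namespace PSaux
variable (k H : Type) [Field k] [Ring H] [HopfAlgebra k H] [FiniteDimensional k H]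

def bB : Module.Basis (Fin (Module.finrank k H)) k H := Module.finBasis k H

def dd (i : Fin (Module.finrank k H)) : H ⊗[k] H →ₗ[k] H :=
  (TensorProduct.rid k H).toLinearMap ∘ₗ LinearMap.lTensor H ((bB k H).coord i)

def cc (i : Fin (Module.finrank k H)) : H →ₗ[k] H := dd k H i ∘ₗ Coalgebra.comul (R := k)

variable {k H}

lemma dd_tmul (i) (x y : H) : dd k H i (x ⊗ₜ[k] y) = (bB k H).coord i y • x := by
  simp [dd]

lemma cc_apply (i) (x : H) : cc k H i x = dd k H i (Coalgebra.comul (R := k) x) := rfl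

lemma expand (t : H ⊗[k] H) : ∑ i, (dd k H i t) ⊗ₜ[k] (bB k H) i = t := by
  induction t with
  | zero => simp
  | tmul x y =>
      calc ∑ i, (dd k H i (x ⊗ₜ[k] y)) ⊗ₜ[k] (bB k H) i
          = ∑ i, x ⊗ₜ[k] ((bB k H).coord i y • (bB k H) i) :=
            Finset.sum_congr rfl fun i _ => by rw [dd_tmul, smul_tmul]
        _ = x ⊗ₜ[k] ∑ i, (bB k H).coord i y • (bB k H) i := (TensorProduct.tmul_sum _ _ _).symm
        _ = x ⊗ₜ[k] y := by
            congr 1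
            simpa [Module.Basis.coord_apply] using (bB k H).sum_repr y
  | add s t hs ht =>
      simp only [map_add, TensorProduct.add_tmul, Finset.sum_add_distrib, hs, ht]

lemma comul_eq (h : H) :
    Coalgebra.comul (R := k) h = ∑ i, cc k H i h ⊗ₜ[k] (bB k H) i := by
  simpa [cc] using (expand (Coalgebra.comul (R := k) h)).symm

lemma coord_basis (i j : Fin (Module.finrank k H)) :
    (bB k H).coord i ((bB k H) j) = if j = i then (1:k) else 0 := by
  simp [Module.Basis.coord_apply, Finsupp.single_apply]

/-- coassociativity, coefficient form -/
lemma coassoc' (x : H) :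
    ∑ j, cc k H j x ⊗ₜ[k] Coalgebra.comul (R := k) ((bB k H) j)
      = ∑ j, ∑ l, cc k H l (cc k H j x) ⊗ₜ[k] ((bB k H) l ⊗ₜ[k] (bB k H) j) := by
  have h1 : (LinearMap.lTensor H (Coalgebra.comul (R := k))) (Coalgebra.comul (R := k) x)
      = ∑ j, cc k H j x ⊗ₜ[k] Coalgebra.comul (R := k) ((bB k H) j) := by
    rw [comul_eq x, map_sum]; simp
  have h2 : (TensorProduct.assoc k H H H)
      ((LinearMap.rTensor H (Coalgebra.comul (R := k))) (Coalgebra.comul (R := k) x))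
      = ∑ j, ∑ l, cc k H l (cc k H j x) ⊗ₜ[k] ((bB k H) l ⊗ₜ[k] (bB k H) j) := by
    rw [comul_eq x, map_sum, map_sum]
    refine Finset.sum_congr rfl fun j _ => ?_
    rw [LinearMap.rTensor_tmul, comul_eq (cc k H j x), TensorProduct.sum_tmul, map_sum]
    simp
  rw [← h1, ← h2, Coalgebra.coassoc_apply]

/-- coassociativity: `Δ(h₍m₎) = Σ h₁ ⊗ (h₂)₍m₎` -/
lemma R1 (m) (x : H) :
    Coalgebra.comul (R := k) (cc k H m x) = ∑ i, cc k H i x ⊗ₜ[k] cc k H m ((bB k H) i) := by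
  have key := congrArg (LinearMap.lTensor H (dd k H m)) (coassoc' (k := k) x)
  rw [map_sum, map_sum] at key
  have hL : ∀ j, (LinearMap.lTensor H (dd k H m))
      (cc k H j x ⊗ₜ[k] Coalgebra.comul (R := k) ((bB k H) j))
      = cc k H j x ⊗ₜ[k] cc k H m ((bB k H) j) := fun j => by
    rw [LinearMap.lTensor_tmul]; rfl
  have hR : ∑ j, (LinearMap.lTensor H (dd k H m))
        (∑ l, cc k H l (cc k H j x) ⊗ₜ[k] ((bB k H) l ⊗ₜ[k] (bB k H) j))
      = Coalgebra.comul (R := k) (cc k H m x) := by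
    have : ∀ j, (LinearMap.lTensor H (dd k H m))
        (∑ l, cc k H l (cc k H j x) ⊗ₜ[k] ((bB k H) l ⊗ₜ[k] (bB k H) j))
        = if j = m then ∑ l, cc k H l (cc k H j x) ⊗ₜ[k] (bB k H) l else 0 := by
      intro j
      rw [map_sum]
      simp only [LinearMap.lTensor_tmul, dd_tmul, coord_basis, TensorProduct.tmul_smul,
        ite_smul, one_smul, zero_smul]
      split <;> simp
    rw [Finset.sum_congr rfl fun j _ => this j, Finset.sum_ite_eq' Finset.univ m]
    simp [comul_eq (cc k H m x)]
  rw [Finset.sum_congr rfl fun j _ => hL j] at key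
  rw [hR] at key
  exact key.symm

end PSaux

open PSaux

section Aux2
variable {k H : Type} [Field k] [Ring H] [HopfAlgebra k H] [FiniteDimensional k H]

lemma dualAct_eq (f : Module.Dual k H) (x : H) :
    dualAct k H f x = ∑ m, f ((bB k H) m) • cc k H m x := by
  rw [dualAct, LinearMap.comp_apply, LinearMap.comp_apply, comul_eq x, map_sum, map_sum]
  simp [TensorProduct.smul_tmul']

lemma comul3_eq (x : H) :
    comul3 k H x = ∑ p : Fin (Module.finrank k H) × Fin (Module.finrank k H),
      cc k H p.1 x ⊗ₜ[k] (cc k H p.2 ((bB k H) p.1) ⊗ₜ[k] (bB k H) p.2) := by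
  rw [comul3, LinearMap.comp_apply, comul_eq x, map_sum, Fintype.sum_prod_type]
  refine Finset.sum_congr rfl fun i _ => ?_
  rw [LinearMap.lTensor_tmul, comul_eq ((bB k H) i), TensorProduct.tmul_sum]

lemma dualAct_counit (x : H) :
    dualAct k H (Coalgebra.counit (R := k)) x = x := by
  rw [dualAct, LinearMap.comp_apply, LinearMap.comp_apply,
    Coalgebra.lTensor_counit_comul (R := k) x]
  simp

lemma dualAct_conv (f g : Module.Dual k H) (x : H) :
    dualAct k H (convD k H f g) x = dualAct k H f (dualAct k H g x) := by
  set Λ : H ⊗[k] (H ⊗[k] H) →ₗ[k] H :=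
    (TensorProduct.rid k H).toLinearMap ∘ₗ
      LinearMap.lTensor H (LinearMap.mul' k k ∘ₗ TensorProduct.map f g) with hΛ
  have key := congrArg Λ (coassoc' (k := k) x)
  rw [map_sum, map_sum] at key
  have hL : ∀ j, Λ (cc k H j x ⊗ₜ[k] Coalgebra.comul (R := k) ((bB k H) j))
      = convD k H f g ((bB k H) j) • cc k H j x := fun j => by
    simp [hΛ, convD]
  have hR : ∀ j, Λ (∑ l, cc k H l (cc k H j x) ⊗ₜ[k] ((bB k H) l ⊗ₜ[k] (bB k H) j))
      = ∑ l, (f ((bB k H) l) * g ((bB k H) j)) • cc k H l (cc k H j x) := fun j => by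
    rw [map_sum]
    exact Finset.sum_congr rfl fun l _ => by simp [hΛ]
  rw [Finset.sum_congr rfl fun j _ => hL j, Finset.sum_congr rfl fun j _ => hR j] at key
  calc dualAct k H (convD k H f g) x
      = ∑ j, convD k H f g ((bB k H) j) • cc k H j x := dualAct_eq _ _
    _ = ∑ j, ∑ l, (f ((bB k H) l) * g ((bB k H) j)) • cc k H l (cc k H j x) := key
    _ = dualAct k H f (dualAct k H g x) := by
        rw [dualAct_eq g x, map_sum]
        refine Finset.sum_congr rfl fun j _ => ?_
        rw [map_smul, dualAct_eq f (cc k H j x), Finset.smul_sum]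
        refine Finset.sum_congr rfl fun l _ => ?_
        rw [smul_smul, mul_comm]

lemma dualAct_mul (f : Module.Dual k H) (ι : Type) (s : Finset ι)
    (f₁ f₂ : ι → Module.Dual k H)
    (hf : ∀ g g' : H, f (g * g') = ∑ i ∈ s, f₁ i g * f₂ i g') (u v : H) :
    dualAct k H f (u * v) = ∑ t ∈ s, dualAct k H (f₁ t) u * dualAct k H (f₂ t) v := by
  have hcm : Coalgebra.comul (R := k) (u * v)
      = ∑ m, ∑ n, (cc k H m u * cc k H n v) ⊗ₜ[k] ((bB k H) m * (bB k H) n) := by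
    rw [Bialgebra.comul_mul, comul_eq u, comul_eq v, Finset.sum_mul_sum]
    simp [Algebra.TensorProduct.tmul_mul_tmul]
  rw [dualAct, LinearMap.comp_apply, LinearMap.comp_apply, hcm, map_sum, map_sum]
  simp only [map_sum, LinearMap.lTensor_tmul, TensorProduct.rid_tmul]
  calc ∑ m, ∑ n, f ((bB k H) m * (bB k H) n) • (cc k H m u * cc k H n v)
      = ∑ m, ∑ n, ∑ t ∈ s, (f₁ t ((bB k H) m) * f₂ t ((bB k H) n)) • (cc k H m u * cc k H n v) := by
        refine Finset.sum_congr rfl fun m _ => Finset.sum_congr rfl fun n _ => ?_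
        rw [hf, Finset.sum_smul]
    _ = ∑ t ∈ s, ∑ m, ∑ n,
          (f₁ t ((bB k H) m) * f₂ t ((bB k H) n)) • (cc k H m u * cc k H n v) := by
        rw [Finset.sum_congr rfl
          fun (m : Fin (Module.finrank k H)) (_ : m ∈ Finset.univ) => Finset.sum_comm]
        exact Finset.sum_comm
    _ = ∑ t ∈ s, dualAct k H (f₁ t) u * dualAct k H (f₂ t) v := by
        refine Finset.sum_congr rfl fun t _ => ?_
        rw [dualAct_eq (f₁ t) u, dualAct_eq (f₂ t) v, Finset.sum_mul_sum]
        refine Finset.sum_congr rfl fun m _ => Finset.sum_congr rfl fun n _ => ?_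
        rw [smul_mul_smul_comm]

end Aux2

section Aux3
variable {k H A : Type} [Field k] [Ring H] [HopfAlgebra k H] [FiniteDimensional k H]
  [Ring A] [Algebra k A]

lemma symA (P : PartialBimoduleAlgebra k H A) (hsym : SymCond k H A P) (a : A) (x : H) :
    ∑ j, P.actR a (HopfAlgebra.antipode (R := k) (cc k H j x)) ⊗ₜ[k] (bB k H) j
      = ∑ j, P.actR a (HopfAlgebra.antipode (R := k) ((bB k H) j)) ⊗ₜ[k] cc k H j x :=
  hsym a x _ Finset.univ _ _ (comul_eq x)

lemma SymCore (P : PartialBimoduleAlgebra k H A) (hsym : SymCond k H A P)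
    (f : Module.Dual k H) (α : A) (y : H) :
    ∑ s, ∑ m, f ((bB k H) m) •
        (P.actR α (HopfAlgebra.antipode (R := k) ((bB k H) s)) ⊗ₜ[k] cc k H m (cc k H s y))
      = ∑ s, ∑ m, f ((bB k H) s) •
        (P.actR α (HopfAlgebra.antipode (R := k) ((bB k H) m)) ⊗ₜ[k] cc k H m (cc k H s y)) := by
  set Λ : H ⊗[k] (H ⊗[k] H) →ₗ[k] A ⊗[k] H :=
    TensorProduct.map ((P.actR α) ∘ₗ HopfAlgebra.antipode (R := k))
      ((TensorProduct.rid k H).toLinearMap ∘ₗ LinearMap.lTensor H f) with hΛ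
  have key := congrArg Λ (coassoc' (k := k) y)
  rw [map_sum, map_sum] at key
  have hK1 : ∀ j, Λ (cc k H j y ⊗ₜ[k] Coalgebra.comul (R := k) ((bB k H) j))
      = P.actR α (HopfAlgebra.antipode (R := k) (cc k H j y)) ⊗ₜ[k]
          dualAct k H f ((bB k H) j) := fun j => by
    rw [hΛ, TensorProduct.map_tmul]; rfl
  have hK2 : ∀ j, Λ (∑ l, cc k H l (cc k H j y) ⊗ₜ[k] ((bB k H) l ⊗ₜ[k] (bB k H) j))
      = ∑ l, f ((bB k H) j) •
          (P.actR α (HopfAlgebra.antipode (R := k) (cc k H l (cc k H j y))) ⊗ₜ[k] (bB k H) l) :=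
      fun j => by
    rw [map_sum]
    refine Finset.sum_congr rfl fun l _ => ?_
    rw [hΛ, TensorProduct.map_tmul]
    simp [TensorProduct.tmul_smul]
  rw [Finset.sum_congr rfl fun j _ => hK1 j, Finset.sum_congr rfl fun j _ => hK2 j] at key
  calc ∑ s, ∑ m, f ((bB k H) m) •
        (P.actR α (HopfAlgebra.antipode (R := k) ((bB k H) s)) ⊗ₜ[k] cc k H m (cc k H s y))
      = ∑ s, P.actR α (HopfAlgebra.antipode (R := k) ((bB k H) s)) ⊗ₜ[k]
          dualAct k H f (cc k H s y) := by
        refine Finset.sum_congr rfl fun s _ => ?_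
        rw [dualAct_eq, TensorProduct.tmul_sum]
        exact Finset.sum_congr rfl fun m _ => (TensorProduct.tmul_smul _ _ _).symm
    _ = LinearMap.lTensor A (dualAct k H f)
          (∑ s, P.actR α (HopfAlgebra.antipode (R := k) ((bB k H) s)) ⊗ₜ[k] cc k H s y) := by
        rw [map_sum]
        exact Finset.sum_congr rfl fun s _ => (LinearMap.lTensor_tmul _ _ _ _).symm
    _ = LinearMap.lTensor A (dualAct k H f)
          (∑ s, P.actR α (HopfAlgebra.antipode (R := k) (cc k H s y)) ⊗ₜ[k] (bB k H) s) := by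
        rw [symA P hsym α y]
    _ = ∑ s, P.actR α (HopfAlgebra.antipode (R := k) (cc k H s y)) ⊗ₜ[k]
          dualAct k H f ((bB k H) s) := by
        rw [map_sum]
        exact Finset.sum_congr rfl fun s _ => LinearMap.lTensor_tmul _ _ _ _
    _ = ∑ s, ∑ l, f ((bB k H) s) •
          (P.actR α (HopfAlgebra.antipode (R := k) (cc k H l (cc k H s y))) ⊗ₜ[k] (bB k H) l) := by
        exact key
    _ = ∑ s, ∑ m, f ((bB k H) s) •
        (P.actR α (HopfAlgebra.antipode (R := k) ((bB k H) m)) ⊗ₜ[k] cc k H m (cc k H s y)) := by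
        refine Finset.sum_congr rfl fun s _ => ?_
        rw [← Finset.smul_sum, ← Finset.smul_sum]
        congr 1
        exact symA P hsym α (cc k H s y)

end Aux3

section Aux4
variable {k H A : Type} [Field k] [Ring H] [HopfAlgebra k H] [FiniteDimensional k H]
  [Ring A] [Algebra k A]

lemma sum_rot {M : Type*} [AddCommMonoid M] {I J K : Type*} [Fintype I] [Fintype J] [Fintype K]
    (f : I → J → K → M) :
    ∑ r, ∑ s, ∑ m, f r s m = ∑ m, ∑ r, ∑ s, f r s m :=
  (Finset.sum_congr rfl fun _ _ => Finset.sum_comm).trans Finset.sum_comm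

lemma SymSpec (P : PartialBimoduleAlgebra k H A) (hsym : SymCond k H A P)
    (f : Module.Dual k H) (α : A) (y : H) (a : A) (G : H) :
    ∑ s, ∑ m, f ((bB k H) m) •
        ((a * P.actR α (HopfAlgebra.antipode (R := k) ((bB k H) s)))
          ⊗ₜ[k] (cc k H m (cc k H s y) * G))
      = ∑ s, ∑ m, f ((bB k H) s) •
        ((a * P.actR α (HopfAlgebra.antipode (R := k) ((bB k H) m)))
          ⊗ₜ[k] (cc k H m (cc k H s y) * G)) := by
  have key := congrArg
    (TensorProduct.map (LinearMap.mulLeft k a) (LinearMap.mulRight k G))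
    (SymCore P hsym f α y)
  rw [map_sum, map_sum] at key
  simpa only [map_sum, map_smul, TensorProduct.map_tmul, LinearMap.mulLeft_apply,
    LinearMap.mulRight_apply] using key

lemma mu_tmul_pair (P : PartialBimoduleAlgebra k H A)
    (μ : A ⊗[k] H →ₗ[k] A ⊗[k] H →ₗ[k] A ⊗[k] H) (hμ : IsPartialSmashMul k H A P μ)
    (a b : A) (h g : H) :
    μ (a ⊗ₜ[k] h) (b ⊗ₜ[k] g)
      = ∑ p : Fin (Module.finrank k H) × Fin (Module.finrank k H),
          (a * P.actR (P.actL (cc k H p.1 h) b)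
            (HopfAlgebra.antipode (R := k) ((bB k H) p.2)))
          ⊗ₜ[k] (cc k H p.2 ((bB k H) p.1) * g) :=
  hμ a b h g (Fin (Module.finrank k H) × Fin (Module.finrank k H)) Finset.univ
    (fun p => cc k H p.1 h) (fun p => cc k H p.2 ((bB k H) p.1))
    (fun p => (bB k H) p.2) (comul3_eq h)

lemma mu_tmul (P : PartialBimoduleAlgebra k H A)
    (μ : A ⊗[k] H →ₗ[k] A ⊗[k] H →ₗ[k] A ⊗[k] H) (hμ : IsPartialSmashMul k H A P μ)
    (a b : A) (h g : H) :
    μ (a ⊗ₜ[k] h) (b ⊗ₜ[k] g)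
      = ∑ r, ∑ s, (a * P.actR (P.actL (cc k H r h) b)
            (HopfAlgebra.antipode (R := k) ((bB k H) s)))
          ⊗ₜ[k] (cc k H s ((bB k H) r) * g) := by
  rw [mu_tmul_pair P μ hμ, Fintype.sum_prod_type]

/-- master lemma -/
lemma ML (P : PartialBimoduleAlgebra k H A) (hsym : SymCond k H A P)
    (μ : A ⊗[k] H →ₗ[k] A ⊗[k] H →ₗ[k] A ⊗[k] H) (hμ : IsPartialSmashMul k H A P μ)
    (φ : Module.Dual k H) (a b : A) (x G : H) :
    ∑ r, ∑ s, (a * P.actR (P.actL (cc k H r x) b)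
          (HopfAlgebra.antipode (R := k) ((bB k H) s)))
        ⊗ₜ[k] (dualAct k H φ (cc k H s ((bB k H) r)) * G)
      = μ (a ⊗ₜ[k] dualAct k H φ x) (b ⊗ₜ[k] G) := by
  -- the bilinear re-association gadget
  set F : H ⊗[k] H →ₗ[k] A ⊗[k] H :=
    ∑ s, TensorProduct.map
      (LinearMap.mulLeft k a ∘ₗ
        (P.actR.flip (HopfAlgebra.antipode (R := k) ((bB k H) s))) ∘ₗ (P.actL.flip b))
      (LinearMap.mulRight k G ∘ₗ cc k H s) with hF
  have hFtmul : ∀ (u v : H), F (u ⊗ₜ[k] v)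
      = ∑ s, (a * P.actR (P.actL u b) (HopfAlgebra.antipode (R := k) ((bB k H) s)))
          ⊗ₜ[k] (cc k H s v * G) := fun u v => by
    rw [hF, LinearMap.sum_apply]
    exact Finset.sum_congr rfl fun s _ => by simp
  have hc1 : ∀ m, F (Coalgebra.comul (R := k) (cc k H m x))
      = ∑ r, ∑ s, (a * P.actR (P.actL (cc k H r (cc k H m x)) b)
            (HopfAlgebra.antipode (R := k) ((bB k H) s)))
          ⊗ₜ[k] (cc k H s ((bB k H) r) * G) := fun m => by
    rw [comul_eq (cc k H m x), map_sum]
    exact Finset.sum_congr rfl fun r _ => hFtmul _ _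
  have hc2 : ∀ m, F (Coalgebra.comul (R := k) (cc k H m x))
      = ∑ r, ∑ s, (a * P.actR (P.actL (cc k H r x) b)
            (HopfAlgebra.antipode (R := k) ((bB k H) s)))
          ⊗ₜ[k] (cc k H s (cc k H m ((bB k H) r)) * G) := fun m => by
    rw [R1 m x, map_sum]
    exact Finset.sum_congr rfl fun r _ => hFtmul _ _
  -- compute the right-hand side
  have hRHS : μ (a ⊗ₜ[k] dualAct k H φ x) (b ⊗ₜ[k] G)
      = ∑ m, φ ((bB k H) m) •
          (∑ r, ∑ s, (a * P.actR (P.actL (cc k H r x) b)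
              (HopfAlgebra.antipode (R := k) ((bB k H) s)))
            ⊗ₜ[k] (cc k H s (cc k H m ((bB k H) r)) * G)) := by
    rw [dualAct_eq φ x, TensorProduct.tmul_sum, map_sum, LinearMap.sum_apply]
    refine Finset.sum_congr rfl fun m _ => ?_
    rw [TensorProduct.tmul_smul, map_smul, LinearMap.smul_apply]
    rw [mu_tmul P μ hμ, ← hc1 m, hc2 m]
  rw [hRHS]
  -- compute the left-hand side
  have hLHS : ∀ r s, (a * P.actR (P.actL (cc k H r x) b)
          (HopfAlgebra.antipode (R := k) ((bB k H) s)))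
        ⊗ₜ[k] (dualAct k H φ (cc k H s ((bB k H) r)) * G)
      = ∑ m, φ ((bB k H) m) •
          ((a * P.actR (P.actL (cc k H r x) b)
              (HopfAlgebra.antipode (R := k) ((bB k H) s)))
            ⊗ₜ[k] (cc k H m (cc k H s ((bB k H) r)) * G)) := fun r s => by
    rw [dualAct_eq, Finset.sum_mul, TensorProduct.tmul_sum]
    exact Finset.sum_congr rfl fun m _ => by rw [smul_mul_assoc, TensorProduct.tmul_smul]
  rw [Finset.sum_congr rfl fun r (_ : r ∈ Finset.univ) =>
    Finset.sum_congr rfl fun s (_ : s ∈ Finset.univ) => hLHS r s]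
  -- now both sides are triple sums; reorder and apply the symmetry
  calc ∑ r, ∑ s, ∑ m, φ ((bB k H) m) •
        ((a * P.actR (P.actL (cc k H r x) b) (HopfAlgebra.antipode (R := k) ((bB k H) s)))
          ⊗ₜ[k] (cc k H m (cc k H s ((bB k H) r)) * G))
      = ∑ r, ∑ s, ∑ m, φ ((bB k H) s) •
        ((a * P.actR (P.actL (cc k H r x) b) (HopfAlgebra.antipode (R := k) ((bB k H) m)))
          ⊗ₜ[k] (cc k H m (cc k H s ((bB k H) r)) * G)) := by
        exact Finset.sum_congr rfl fun r _ =>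
          SymSpec P hsym φ (P.actL (cc k H r x) b) ((bB k H) r) a G
    _ = ∑ m, ∑ r, ∑ s, φ ((bB k H) m) •
        ((a * P.actR (P.actL (cc k H r x) b) (HopfAlgebra.antipode (R := k) ((bB k H) s)))
          ⊗ₜ[k] (cc k H s (cc k H m ((bB k H) r)) * G)) := by
        exact Finset.sum_comm
    _ = ∑ m, φ ((bB k H) m) •
          (∑ r, ∑ s, (a * P.actR (P.actL (cc k H r x) b)
              (HopfAlgebra.antipode (R := k) ((bB k H) s)))
            ⊗ₜ[k] (cc k H s (cc k H m ((bB k H) r)) * G)) := by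
        refine Finset.sum_congr rfl fun m _ => ?_
        rw [Finset.smul_sum]
        exact Finset.sum_congr rfl fun r _ => (Finset.smul_sum).symm
end Aux4

section Aux5
variable {k H A : Type} [Field k] [Ring H] [HopfAlgebra k H] [FiniteDimensional k H]
  [Ring A] [Algebra k A]

lemma MLpair (P : PartialBimoduleAlgebra k H A) (hsym : SymCond k H A P)
    (μ : A ⊗[k] H →ₗ[k] A ⊗[k] H →ₗ[k] A ⊗[k] H) (hμ : IsPartialSmashMul k H A P μ)
    (φ : Module.Dual k H) (a b : A) (x G : H) :
    ∑ p : Fin (Module.finrank k H) × Fin (Module.finrank k H),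
        (a * P.actR (P.actL (cc k H p.1 x) b)
          (HopfAlgebra.antipode (R := k) ((bB k H) p.2)))
        ⊗ₜ[k] (dualAct k H φ (cc k H p.2 ((bB k H) p.1)) * G)
      = μ (a ⊗ₜ[k] dualAct k H φ x) (b ⊗ₜ[k] G) := by
  rw [Fintype.sum_prod_type]
  exact ML P hsym μ hμ φ a b x G

lemma L1 (P : PartialBimoduleAlgebra k H A) (hsym : SymCond k H A P)
    (μ : A ⊗[k] H →ₗ[k] A ⊗[k] H →ₗ[k] A ⊗[k] H) (hμ : IsPartialSmashMul k H A P μ)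
    (f : Module.Dual k H) (a : A) (h : H) :
    LinearMap.lTensor A (dualAct k H f) (μ (a ⊗ₜ[k] h) ((1:A) ⊗ₜ[k] (1:H)))
      = μ (a ⊗ₜ[k] dualAct k H f h) ((1:A) ⊗ₜ[k] (1:H)) := by
  calc LinearMap.lTensor A (dualAct k H f) (μ (a ⊗ₜ[k] h) ((1:A) ⊗ₜ[k] (1:H)))
      = ∑ p : Fin (Module.finrank k H) × Fin (Module.finrank k H),
          (a * P.actR (P.actL (cc k H p.1 h) 1)
            (HopfAlgebra.antipode (R := k) ((bB k H) p.2)))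
          ⊗ₜ[k] (dualAct k H f (cc k H p.2 ((bB k H) p.1)) * 1) := by
        rw [mu_tmul_pair P μ hμ a 1 h 1, map_sum]
        refine Finset.sum_congr rfl fun p _ => ?_
        rw [LinearMap.lTensor_tmul, mul_one, mul_one]
    _ = μ (a ⊗ₜ[k] dualAct k H f h) ((1:A) ⊗ₜ[k] (1:H)) := MLpair P hsym μ hμ f a 1 h 1

lemma L1map (P : PartialBimoduleAlgebra k H A) (hsym : SymCond k H A P)
    (μ : A ⊗[k] H →ₗ[k] A ⊗[k] H →ₗ[k] A ⊗[k] H) (hμ : IsPartialSmashMul k H A P μ)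
    (f : Module.Dual k H) :
    LinearMap.lTensor A (dualAct k H f) ∘ₗ μ.flip ((1:A) ⊗ₜ[k] (1:H))
      = μ.flip ((1:A) ⊗ₜ[k] (1:H)) ∘ₗ LinearMap.lTensor A (dualAct k H f) :=
  TensorProduct.ext' fun a h => by
    simp only [LinearMap.comp_apply, LinearMap.flip_apply, LinearMap.lTensor_tmul]
    exact L1 P hsym μ hμ f a h

lemma sum_rot4 {M : Type*} [AddCommMonoid M] {I J K ι : Type*}
    [Fintype I] [Fintype J] [Fintype K] (s : Finset ι) (f : I → J → K → ι → M) :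
    ∑ r, ∑ p, ∑ q, ∑ t ∈ s, f r p q t = ∑ t ∈ s, ∑ r, ∑ p, ∑ q, f r p q t :=
  ((Finset.sum_congr rfl fun r _ => Finset.sum_congr rfl fun p _ => Finset.sum_comm).trans
    (Finset.sum_congr rfl fun r _ => Finset.sum_comm)).trans Finset.sum_comm

def aaF (P : PartialBimoduleAlgebra k H A) (a : A) (h : H)
    (p : Fin (Module.finrank k H) × Fin (Module.finrank k H)) : A :=
  a * P.actR (P.actL (cc k H p.1 h) 1) (HopfAlgebra.antipode (R := k) ((bB k H) p.2))

def hhF (p : Fin (Module.finrank k H) × Fin (Module.finrank k H)) : H :=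
  cc k H p.2 ((bB (k := k) H) p.1)

lemma tauEq (P : PartialBimoduleAlgebra k H A)
    (μ : A ⊗[k] H →ₗ[k] A ⊗[k] H →ₗ[k] A ⊗[k] H) (hμ : IsPartialSmashMul k H A P μ)
    (a : A) (h : H) :
    μ (a ⊗ₜ[k] h) ((1:A) ⊗ₜ[k] (1:H)) = ∑ p, aaF P a h p ⊗ₜ[k] hhF (k := k) p := by
  rw [mu_tmul_pair P μ hμ a 1 h 1]
  exact Finset.sum_congr rfl fun p _ => by rw [mul_one]; rfl

lemma tauEqf (P : PartialBimoduleAlgebra k H A)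
    (μ : A ⊗[k] H →ₗ[k] A ⊗[k] H →ₗ[k] A ⊗[k] H) (hμ : IsPartialSmashMul k H A P μ)
    (φ : Module.Dual k H) (a : A) (h : H) :
    LinearMap.lTensor A (dualAct k H φ) (μ (a ⊗ₜ[k] h) ((1:A) ⊗ₜ[k] (1:H)))
      = ∑ p, aaF P a h p ⊗ₜ[k] dualAct k H φ (hhF (k := k) p) := by
  rw [tauEq P μ hμ, map_sum]
  exact Finset.sum_congr rfl fun p _ => LinearMap.lTensor_tmul _ _ _ _

lemma mu_sum_sum (μ : A ⊗[k] H →ₗ[k] A ⊗[k] H →ₗ[k] A ⊗[k] H)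
    {I J : Type} [Fintype I] [Fintype J] (u : I → A ⊗[k] H) (v : J → A ⊗[k] H) :
    μ (∑ r, u r) (∑ p, v p) = ∑ p, ∑ r, μ (u r) (v p) :=
  (map_sum (μ (∑ r, u r)) v Finset.univ).trans
    (Finset.sum_congr rfl fun p _ => by rw [map_sum, LinearMap.sum_apply])

def WF (P : PartialBimoduleAlgebra k H A) (a b : A) (h g : H) {ι : Type}
    (f₁ f₂ : ι → Module.Dual k H)
    (p r q : Fin (Module.finrank k H) × Fin (Module.finrank k H)) (t : ι) : A ⊗[k] H :=
  (aaF P a h r * P.actR (P.actL (cc k H q.1 (hhF (k := k) r)) (aaF P b g p))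
      (HopfAlgebra.antipode (R := k) ((bB k H) q.2)))
    ⊗ₜ[k] (dualAct k H (f₁ t) (cc k H q.2 ((bB k H) q.1))
            * dualAct k H (f₂ t) (hhF (k := k) p))

set_option maxHeartbeats 1000000 in
lemma L5pure (P : PartialBimoduleAlgebra k H A) (hsym : SymCond k H A P)
    (μ : A ⊗[k] H →ₗ[k] A ⊗[k] H →ₗ[k] A ⊗[k] H) (hμ : IsPartialSmashMul k H A P μ)
    (f : Module.Dual k H) (ι : Type) (s : Finset ι) (f₁ f₂ : ι → Module.Dual k H)
    (hf : ∀ g g' : H, f (g * g') = ∑ i ∈ s, f₁ i g * f₂ i g') (a b : A) (h g : H) :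
    LinearMap.lTensor A (dualAct k H f)
        (μ (μ (a ⊗ₜ[k] h) ((1:A) ⊗ₜ[k] (1:H))) (μ (b ⊗ₜ[k] g) ((1:A) ⊗ₜ[k] (1:H))))
      = ∑ t ∈ s, μ (μ (a ⊗ₜ[k] dualAct k H (f₁ t) h) ((1:A) ⊗ₜ[k] (1:H)))
          (μ (b ⊗ₜ[k] dualAct k H (f₂ t) g) ((1:A) ⊗ₜ[k] (1:H))) := by
  calc LinearMap.lTensor A (dualAct k H f)
        (μ (μ (a ⊗ₜ[k] h) ((1:A) ⊗ₜ[k] (1:H))) (μ (b ⊗ₜ[k] g) ((1:A) ⊗ₜ[k] (1:H))))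
      = ∑ p, ∑ r, LinearMap.lTensor A (dualAct k H f)
          (μ (aaF P a h r ⊗ₜ[k] hhF (k := k) r) (aaF P b g p ⊗ₜ[k] hhF (k := k) p)) := by
        rw [tauEq P μ hμ a h, tauEq P μ hμ b g, mu_sum_sum μ, map_sum]
        exact Finset.sum_congr rfl fun p _ => map_sum _ _ _
    _ = ∑ p, ∑ r, ∑ q, ∑ t ∈ s, WF P a b h g f₁ f₂ p r q t := by
        refine Finset.sum_congr rfl fun p _ => Finset.sum_congr rfl fun r _ => ?_
        rw [mu_tmul_pair P μ hμ, map_sum]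
        refine Finset.sum_congr rfl fun q _ => ?_
        rw [LinearMap.lTensor_tmul, dualAct_mul f ι s f₁ f₂ hf, TensorProduct.tmul_sum]
        rfl
    _ = ∑ t ∈ s, ∑ p, ∑ r, ∑ q, WF P a b h g f₁ f₂ p r q t :=
        sum_rot4 s (WF P a b h g f₁ f₂)
    _ = ∑ t ∈ s, ∑ p, ∑ r,
          μ (aaF P a h r ⊗ₜ[k] dualAct k H (f₁ t) (hhF (k := k) r))
            (aaF P b g p ⊗ₜ[k] dualAct k H (f₂ t) (hhF (k := k) p)) := by
        refine Finset.sum_congr rfl fun t _ => Finset.sum_congr rfl fun p _ =>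
          Finset.sum_congr rfl fun r _ => ?_
        exact MLpair P hsym μ hμ (f₁ t) (aaF P a h r) (aaF P b g p) (hhF (k := k) r)
          (dualAct k H (f₂ t) (hhF (k := k) p))
    _ = ∑ t ∈ s, μ (∑ r, aaF P a h r ⊗ₜ[k] dualAct k H (f₁ t) (hhF (k := k) r))
          (∑ p, aaF P b g p ⊗ₜ[k] dualAct k H (f₂ t) (hhF (k := k) p)) :=
        Finset.sum_congr rfl fun t _ => (mu_sum_sum μ _ _).symm
    _ = ∑ t ∈ s, μ (μ (a ⊗ₜ[k] dualAct k H (f₁ t) h) ((1:A) ⊗ₜ[k] (1:H)))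
          (μ (b ⊗ₜ[k] dualAct k H (f₂ t) g) ((1:A) ⊗ₜ[k] (1:H))) := by
        refine Finset.sum_congr rfl fun t _ => ?_
        rw [← tauEqf P μ hμ (f₁ t) a h, ← tauEqf P μ hμ (f₂ t) b g,
          L1 P hsym μ hμ (f₁ t) a h, L1 P hsym μ hμ (f₂ t) b g]

lemma L5gen (P : PartialBimoduleAlgebra k H A) (hsym : SymCond k H A P)
    (μ : A ⊗[k] H →ₗ[k] A ⊗[k] H →ₗ[k] A ⊗[k] H) (hμ : IsPartialSmashMul k H A P μ)
    (f : Module.Dual k H) (ι : Type) (s : Finset ι) (f₁ f₂ : ι → Module.Dual k H)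
    (hf : ∀ g g' : H, f (g * g') = ∑ i ∈ s, f₁ i g * f₂ i g') (u v : A ⊗[k] H) :
    LinearMap.lTensor A (dualAct k H f)
        (μ (μ u ((1:A) ⊗ₜ[k] (1:H))) (μ v ((1:A) ⊗ₜ[k] (1:H))))
      = ∑ t ∈ s, μ (μ (LinearMap.lTensor A (dualAct k H (f₁ t)) u) ((1:A) ⊗ₜ[k] (1:H)))
          (μ (LinearMap.lTensor A (dualAct k H (f₂ t)) v) ((1:A) ⊗ₜ[k] (1:H))) := by
  induction u with
  | zero => simp
  | tmul a h =>
    induction v with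
    | zero => simp
    | tmul b g =>
        simp only [LinearMap.lTensor_tmul]
        exact L5pure P hsym μ hμ f ι s f₁ f₂ hf a b h g
    | add v₁ v₂ h₁ h₂ =>
        simp only [map_add, LinearMap.add_apply] at *
        rw [h₁, h₂, ← Finset.sum_add_distrib]
  | add u₁ u₂ h₁ h₂ =>
      simp only [map_add, LinearMap.add_apply] at *
      rw [h₁, h₂, ← Finset.sum_add_distrib]

end Aux5
/-- for `H` finite dimensional, `f · ((a ⊗ h)(1 ⊗ 1)) := (a ⊗ (f ⇀ h))(1 ⊗ 1)`
is a well-defined left action of the dual Hopf algebra `H*` on `A ⊛ H`, making `A ⊛ H`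
a left `H*`-module algebra: `f · (xy) = (f₁ · x)(f₂ · y)` and `ε · x = x`. -/
theorem dual_action_module_algebra_on_partial_smash
    (k H A : Type) [Field k] [Ring H] [HopfAlgebra k H] [FiniteDimensional k H]
    [Ring A] [Algebra k A]
    (P : PartialBimoduleAlgebra k H A) (hsym : SymCond k H A P)
    (μ : A ⊗[k] H →ₗ[k] A ⊗[k] H →ₗ[k] A ⊗[k] H)
    (hμ : IsPartialSmashMul k H A P μ) :
    -- on typical elements, `f · ((a ⊗ h)(1 ⊗ 1)) = (a ⊗ (f ⇀ h))(1 ⊗ 1)`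
    (∀ (f : Module.Dual k H) (a : A) (h : H),
      LinearMap.lTensor A (dualAct k H f) (μ (a ⊗ₜ[k] h) ((1 : A) ⊗ₜ[k] (1 : H)))
        = μ (a ⊗ₜ[k] dualAct k H f h) ((1 : A) ⊗ₜ[k] (1 : H))) ∧
    -- the action is well defined on `A ⊛ H`
    (∀ (f : Module.Dual k H), ∀ x ∈ unitalPart k H A μ,
      LinearMap.lTensor A (dualAct k H f) x ∈ unitalPart k H A μ) ∧
    -- it is a left action of `H*`: `(f ∗ g) · x = f · (g · x)`
    (∀ (f g : Module.Dual k H), ∀ x ∈ unitalPart k H A μ,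
      LinearMap.lTensor A (dualAct k H (convD k H f g)) x
        = LinearMap.lTensor A (dualAct k H f) (LinearMap.lTensor A (dualAct k H g) x)) ∧
    -- the unit `ε = 1_{H*}` acts as the identity
    (∀ x ∈ unitalPart k H A μ,
      LinearMap.lTensor A (dualAct k H (Coalgebra.counit (R := k))) x = x) ∧
    -- module algebra condition: `f · (xy) = (f₁ · x)(f₂ · y)`,
    -- where `Δ_{H*}(f) = f₁ ⊗ f₂` is dual to the multiplication of `H`
    (∀ (f : Module.Dual k H) (ι : Type) (s : Finset ι) (f₁ f₂ : ι → Module.Dual k H),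
      (∀ g g' : H, f (g * g') = ∑ i ∈ s, f₁ i g * f₂ i g') →
      ∀ x ∈ unitalPart k H A μ, ∀ y ∈ unitalPart k H A μ,
        LinearMap.lTensor A (dualAct k H f) (μ x y)
          = ∑ i ∈ s, μ (LinearMap.lTensor A (dualAct k H (f₁ i)) x)
              (LinearMap.lTensor A (dualAct k H (f₂ i)) y)) := by

  refine ⟨fun f a h => L1 P hsym μ hμ f a h, ?_, ?_, ?_, ?_⟩
  · rintro f x ⟨u, rfl⟩
    exact ⟨LinearMap.lTensor A (dualAct k H f) u,
      (LinearMap.congr_fun (L1map P hsym μ hμ f) u).symm⟩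
  · intro f g x _
    have hfg : dualAct k H (convD k H f g) = dualAct k H f ∘ₗ dualAct k H g :=
      LinearMap.ext fun y => dualAct_conv f g y
    rw [hfg, LinearMap.lTensor_comp, LinearMap.comp_apply]
  · intro x _
    have hct : dualAct k H (Coalgebra.counit (R := k)) = LinearMap.id :=
      LinearMap.ext fun y => dualAct_counit y
    rw [hct, LinearMap.lTensor_id, LinearMap.id_apply]
  · rintro f ι s f₁ f₂ hf x ⟨u, rfl⟩ y ⟨v, rfl⟩
    have hu : ∀ φ : Module.Dual k H,
        LinearMap.lTensor A (dualAct k H φ) (μ.flip ((1:A) ⊗ₜ[k] (1:H)) u)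
          = μ (LinearMap.lTensor A (dualAct k H φ) u) ((1:A) ⊗ₜ[k] (1:H)) := fun φ =>
      LinearMap.congr_fun (L1map P hsym μ hμ φ) u
    have hv : ∀ φ : Module.Dual k H,
        LinearMap.lTensor A (dualAct k H φ) (μ.flip ((1:A) ⊗ₜ[k] (1:H)) v)
          = μ (LinearMap.lTensor A (dualAct k H φ) v) ((1:A) ⊗ₜ[k] (1:H)) := fun φ =>
      LinearMap.congr_fun (L1map P hsym μ hμ φ) v
    have hflipu : μ.flip ((1:A) ⊗ₜ[k] (1:H)) u = μ u ((1:A) ⊗ₜ[k] (1:H)) := rfl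
    have hflipv : μ.flip ((1:A) ⊗ₜ[k] (1:H)) v = μ v ((1:A) ⊗ₜ[k] (1:H)) := rfl
    calc LinearMap.lTensor A (dualAct k H f)
          (μ (μ.flip ((1:A) ⊗ₜ[k] (1:H)) u) (μ.flip ((1:A) ⊗ₜ[k] (1:H)) v))
        = ∑ t ∈ s, μ (μ (LinearMap.lTensor A (dualAct k H (f₁ t)) u) ((1:A) ⊗ₜ[k] (1:H)))
            (μ (LinearMap.lTensor A (dualAct k H (f₂ t)) v) ((1:A) ⊗ₜ[k] (1:H))) := by
          rw [hflipu, hflipv]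
          exact L5gen P hsym μ hμ f ι s f₁ f₂ hf u v
      _ = ∑ t ∈ s, μ (LinearMap.lTensor A (dualAct k H (f₁ t)) (μ.flip ((1:A) ⊗ₜ[k] (1:H)) u))
            (LinearMap.lTensor A (dualAct k H (f₂ t)) (μ.flip ((1:A) ⊗ₜ[k] (1:H)) v)) := by
          exact Finset.sum_congr rfl fun t _ => by rw [hu (f₁ t), hv (f₂ t)]
end
end
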